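/- There exists a constant C > 0 such that for all i ≥ 0, 1/(C·2^{2i}) < a_{i+1} - a_i < C/2^{2i}, where a_0 = 1/2 and a_i = (1-2^{1-2i})ζ(2i) for i ≥ 1. -/

import Mathlib

open MeasureTheory Real Filter

/-- `aSeq i = (1 - 2^(1-2i)) ζ(2i)` for `i ≥ 1`, and `aSeq 0 = 1/2`. -/
noncomputable def aSeq : ℕ → ℝ
  | 0 => 1/2
  | (i+1) => (1 - (2:ℝ) ^ ((1 : ℤ) - 2 * ((i : ℤ) + 1))) *
      ∑' n : ℕ, (1 : ℝ) / ((n : ℝ) + 1) ^ (2 * (i + 1))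

lemma summable_shift (c m : ℕ) (hm : 1 < m) :
    Summable (fun n : ℕ => (1:ℝ) / ((n : ℝ) + c) ^ m) := by
  have h : Summable (fun n : ℕ => (1:ℝ) / (n:ℝ) ^ m) :=
    Real.summable_one_div_nat_pow.mpr hm
  have h2 := (summable_nat_add_iff (f := fun n : ℕ => (1:ℝ) / (n:ℝ) ^ m) c).2 h
  refine h2.congr fun n => ?_
  push_cast
  ring

noncomputable def tTail (k : ℕ) : ℝ := ∑' n : ℕ, (1:ℝ) / ((n : ℝ) + 3) ^ (2 * k)

lemma tTail_nonneg (k : ℕ) : 0 ≤ tTail k :=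
  tsum_nonneg fun n => by positivity

lemma hasSum_tele : HasSum (fun n : ℕ => (1:ℝ)/((n:ℝ)+2) - 1/((n:ℝ)+3)) (1/2) := by
  have hnn : ∀ n : ℕ, 0 ≤ (1:ℝ)/((n:ℝ)+2) - 1/((n:ℝ)+3) := by
    intro n
    have h2 : (0:ℝ) < (n:ℝ)+2 := by positivity
    rw [sub_nonneg]
    apply one_div_le_one_div_of_le h2; linarith
  rw [hasSum_iff_tendsto_nat_of_nonneg hnn]
  have key : ∀ N : ℕ, ∑ i ∈ Finset.range N, ((1:ℝ)/((i:ℝ)+2) - 1/((i:ℝ)+3))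
      = 1/2 - 1/((N:ℝ)+2) := by
    intro N
    have h := Finset.sum_range_sub' (fun i : ℕ => (1:ℝ)/((i:ℝ)+2)) N
    rw [show ∑ i ∈ Finset.range N, ((1:ℝ)/((i:ℝ)+2) - 1/((i:ℝ)+3))
        = ∑ i ∈ Finset.range N, ((1:ℝ)/((i:ℝ)+2) - 1/((↑(i+1):ℝ)+2)) from
      Finset.sum_congr rfl fun i _ => by push_cast; ring, h]
    norm_num
  simp only [key]
  have h0 : Tendsto (fun N : ℕ => 1/((N:ℝ)+2)) atTop (nhds 0) := by
    have h1 : Tendsto (fun N : ℕ => (N:ℝ)+2) atTop atTop :=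
      tendsto_atTop_add_const_right _ 2 tendsto_natCast_atTop_atTop
    simpa [one_div, Pi.inv_def] using h1.inv_tendsto_atTop
  simpa using (tendsto_const_nhds.sub h0)

lemma tTail_le (k : ℕ) : tTail (k+1) ≤ (9/2) * (1/9:ℝ)^(k+1) := by
  have hb : ∀ n : ℕ, (1:ℝ) / ((n : ℝ) + 3) ^ (2 * (k+1))
      ≤ (1/9:ℝ)^k * ((1:ℝ)/((n:ℝ)+2) - 1/((n:ℝ)+3)) := by
    intro n
    have h2 : (0:ℝ) < (n:ℝ)+2 := by positivity
    have h3 : (0:ℝ) < (n:ℝ)+3 := by positivity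
    have hpow : ((n:ℝ)+2) * ((n:ℝ)+3) * (9:ℝ)^k ≤ ((n:ℝ)+3) ^ (2*(k+1)) := by
      have h9 : (9:ℝ)^k ≤ (((n:ℝ)+3)^2)^k := by
        apply pow_le_pow_left₀ (by norm_num)
        nlinarith
      calc ((n:ℝ)+2) * ((n:ℝ)+3) * (9:ℝ)^k
          ≤ (((n:ℝ)+3)^2) * (((n:ℝ)+3)^2)^k := by
            have : ((n:ℝ)+2) * ((n:ℝ)+3) ≤ ((n:ℝ)+3)^2 := by nlinarith
            have h9nn : (0:ℝ) ≤ (9:ℝ)^k := by positivity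
            nlinarith [pow_nonneg (by positivity : (0:ℝ) ≤ ((n:ℝ)+3)^2) k]
        _ = ((n:ℝ)+3) ^ (2*(k+1)) := by
            rw [← pow_succ', ← pow_mul]
    have heq : (1:ℝ)/((n:ℝ)+2) - 1/((n:ℝ)+3) = 1 / (((n:ℝ)+2) * ((n:ℝ)+3)) := by
      field_simp; ring
    rw [heq]
    rw [show (1/9:ℝ)^k * (1 / (((n:ℝ)+2) * ((n:ℝ)+3)))
        = 1 / (((n:ℝ)+2) * ((n:ℝ)+3) * 9^k) by
      rw [div_pow, one_pow]; field_simp]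
    apply one_div_le_one_div_of_le (by positivity) hpow
  have hsum : Summable (fun n : ℕ => (1:ℝ) / ((n : ℝ) + 3) ^ (2 * (k+1))) := by
    exact_mod_cast summable_shift 3 (2*(k+1)) (by omega)
  have h2 := Summable.tsum_le_tsum hb hsum ((hasSum_tele.summable).mul_left _)
  calc tTail (k+1) ≤ ∑' n : ℕ, (1/9:ℝ)^k * ((1:ℝ)/((n:ℝ)+2) - 1/((n:ℝ)+3)) := h2
    _ = (1/9:ℝ)^k * (1/2) := by rw [tsum_mul_left, hasSum_tele.tsum_eq]
    _ = (9/2) * (1/9:ℝ)^(k+1) := by rw [pow_succ]; ring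

lemma two_zpow_eq (k : ℕ) :
    (2:ℝ) ^ ((1 : ℤ) - 2 * ((k : ℤ) + 1)) = 2 * (1/4:ℝ)^(k+1) := by
  have h : (1 : ℤ) - 2 * ((k : ℤ) + 1) = 1 - (2*(k+1) : ℕ) := by push_cast; ring
  rw [h, zpow_sub₀ (two_ne_zero), zpow_one, zpow_natCast]
  rw [show (2:ℝ)^(2*(k+1)) = 4^(k+1) by rw [pow_mul]; norm_num]
  rw [div_pow, one_pow]
  ring

lemma aSeq_succ_eq (k : ℕ) :
    aSeq (k+1) = (1 - 2*(1/4:ℝ)^(k+1)) * (1 + (1/4:ℝ)^(k+1) + tTail (k+1)) := by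
  show (1 - (2:ℝ) ^ ((1 : ℤ) - 2 * ((k : ℤ) + 1))) *
      (∑' n : ℕ, (1 : ℝ) / ((n : ℝ) + 1) ^ (2 * (k + 1))) = _
  rw [two_zpow_eq]
  congr 1
  have hs : Summable (fun n : ℕ => (1:ℝ) / ((n : ℝ) + 1) ^ (2*(k+1))) := by
    simpa using summable_shift 1 (2*(k+1)) (by omega)
  have A := Summable.tsum_eq_zero_add hs
  have B := Summable.tsum_eq_zero_add ((summable_nat_add_iff
    (f := fun n : ℕ => (1:ℝ) / ((n : ℝ) + 1) ^ (2*(k+1))) 1).2 hs)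
  rw [A, B]
  have C : ∑' (b:ℕ), (1:ℝ)/((↑(b+1+1):ℝ)+1)^(2*(k+1)) = tTail (k+1) := by
    unfold tTail
    apply tsum_congr; intro n; push_cast; ring_nf
  push_cast at C ⊢
  rw [C]
  have f1 : (1:ℝ)/((0:ℝ)+1+1)^(2*(k+1)) = (1/4:ℝ)^(k+1) := by
    rw [div_pow, one_pow, pow_mul]; norm_num
  norm_num [pow_mul]
  ring_nf
  simp only [one_div]; ring

lemma key (k : ℕ) (hk : 1 ≤ k) :
    (9/2)*(1/9:ℝ)^k * (1 - 2*(1/4:ℝ)^k) ≤ (11/16)*(1/4:ℝ)^k + (15/8)*((1/4:ℝ)^k)^2 := by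
  match k with
  | 1 => norm_num
  | 2 => norm_num
  | (m+3) =>
    have hq : (1/9:ℝ)^m ≤ (1/4:ℝ)^m := pow_le_pow_left₀ (by norm_num) (by norm_num) m
    have h1 : (9/2)*(1/9:ℝ)^(m+3) ≤ (11/16)*(1/4:ℝ)^(m+3) := by
      rw [pow_add, pow_add]
      calc (9/2)*((1/9:ℝ)^m * (1/9)^3) = ((1/9:ℝ)^m) * ((9/2)*(1/9)^3) := by ring
        _ ≤ ((1/4:ℝ)^m) * ((11/16)*(1/4)^3) := by
            apply mul_le_mul hq (by norm_num) (by norm_num) (by positivity)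
        _ = (11/16)*((1/4:ℝ)^m * (1/4)^3) := by ring
    nlinarith [pow_nonneg (by norm_num : (0:ℝ) ≤ 1/9) (m+3),
      pow_nonneg (by norm_num : (0:ℝ) ≤ 1/4) (m+3), sq_nonneg ((1/4:ℝ)^(m+3))]

theorem stmt_5 : ∃ C : ℝ, 0 < C ∧ ∀ i : ℕ,
    1 / (C * 2 ^ (2 * i)) < aSeq (i + 1) - aSeq i ∧
    aSeq (i + 1) - aSeq i < C / 2 ^ (2 * i) := by
  refine ⟨32, by norm_num, fun i => ?_⟩
  match i with
  | 0 =>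
    have e1 := aSeq_succ_eq 0
    have ht0 : 0 ≤ tTail 1 := tTail_nonneg 1
    have ht1 : tTail 1 ≤ 1/2 := by
      have := tTail_le 0; norm_num at this; linarith
    have ha0 : aSeq 0 = 1/2 := rfl
    rw [ha0, e1]
    norm_num
    constructor <;> nlinarith
  | (j+1) =>
    set u : ℝ := (1/4:ℝ)^(j+1) with hu
    set t1 : ℝ := tTail (j+1) with hdt1
    set t2 : ℝ := tTail (j+1+1) with hdt2
    have hupos : 0 < u := by positivity
    have hule : u ≤ 1/4 := by
      rw [hu]
      calc (1/4:ℝ)^(j+1) ≤ (1/4:ℝ)^1 :=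
        pow_le_pow_of_le_one (by norm_num) (by norm_num) (by omega)
      _ = 1/4 := pow_one _
    have h9le : (1/9:ℝ)^(j+1) ≤ u :=
      pow_le_pow_left₀ (by norm_num) (by norm_num) _
    have ht1nn : 0 ≤ t1 := tTail_nonneg _
    have ht2nn : 0 ≤ t2 := tTail_nonneg _
    have ht1le : t1 ≤ (9/2) * (1/9:ℝ)^(j+1) := tTail_le j
    have ht2le : t2 ≤ u/2 := by
      have h := tTail_le (j+1)
      rw [← hdt2] at h
      have h2 : (9/2) * (1/9:ℝ)^(j+1+1) = (1/2) * (1/9:ℝ)^(j+1) := by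
        rw [pow_succ]; ring
      rw [h2] at h
      nlinarith
    have hkey := key (j+1) (by omega)
    rw [← hu] at hkey
    have e1 := aSeq_succ_eq (j+1)
    have e0 := aSeq_succ_eq j
    rw [← hu] at e0
    have hu4 : (1/4:ℝ)^(j+1+1) = u * (1/4) := by rw [pow_succ, hu]
    rw [hu4, ← hdt2] at e1
    rw [← hdt1] at e0
    have h2pow : (2:ℝ)^(2*(j+1)) * u = 1 := by
      rw [hu, show (2:ℝ)^(2*(j+1)) = 4^(j+1) by rw [pow_mul]; norm_num,
        div_pow, one_pow]
      field_simp
    have h2pos : (0:ℝ) < 2^(2*(j+1)) := by positivity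
    clear_value u t1 t2
    have hA : t1 * (1 - 2*u) ≤ (11/16)*u + (15/8)*u^2 := by
      have h1 : t1 * (1 - 2*u) ≤ ((9/2) * (1/9:ℝ)^(j+1)) * (1 - 2*u) := by
        apply mul_le_mul_of_nonneg_right ht1le; linarith
      calc t1 * (1 - 2*u) ≤ (9/2) * (1/9:ℝ)^(j+1) * (1 - 2*u) := h1
        _ ≤ (11/16)*u + (15/8)*u^2 := hkey
    have hd : aSeq (j+1+1) - aSeq (j+1)
        = 3/4*u + 15/8*u^2 + t2*(1-u/2) - t1*(1-2*u) := by
      rw [e1, e0]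
      ring
    constructor
    · rw [hd]
      have hlhs : 1 / ((32:ℝ) * 2^(2*(j+1))) = u/32 := by
        rw [div_eq_div_iff (by positivity) (by norm_num : (32:ℝ) ≠ 0)]
        linear_combination (-32) * h2pow
      rw [hlhs]
      have hB : 0 ≤ t2 * (1 - u/2) := mul_nonneg ht2nn (by linarith)
      linarith
    · rw [hd]
      have hrhs : (32:ℝ) / 2^(2*(j+1)) = 32*u := by
        rw [div_eq_iff h2pos.ne']
        linear_combination (-32) * h2pow
      rw [hrhs]
      have hB : t2*(1-u/2) ≤ u/2 := by nlinarith
      have hC : 0 ≤ t1*(1-2*u) := by nlinarith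
      have hE : u^2 ≤ u/4 := by nlinarith
      linarith
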